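/- On E_A = A[t^K][ℓ], the operator d_σ = σ − id is surjective and its kernel equals A. -/

import Mathlib

/-!
The monomials `t^{rep c}`, one for each class `c ∈ K/ℤ`, form a basis of `K[t^K]` over
`K[t,t⁻¹]`, hence of `A[t^K]` over `A`; so `E_A ≅ ⊕_{c ∈ K/ℤ} A[ℓ]` as additive groups, and on
the `c`-th summand `σ` acts by `p ↦ γ(rep c) • p(ℓ + 1)`, where `γ(rep c) = 1` only for `c = 0`.
On `A[ℓ]` the operator `p ↦ u • p(ℓ + 1) - p` is surjective for every `u`: it sends `ℓ^(d+1)`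
(if `u = 1`) resp. `ℓ^d` (if `u ≠ 1`) to a nonzero multiple of `ℓ^d` plus lower terms. For
`u ≠ 1` it is injective (compare leading coefficients), and for `u = 1` its kernel is `A`:
a polynomial with `p(ℓ + 1) = p(ℓ)` has vanishing `(deg p)`-th forward difference, which equals
`(deg p)!` times its leading coefficient.
-/

open scoped TensorProduct
open Polynomial

noncomputable section

/-- `K[t,t⁻¹] → K[t^K]`: the inclusion of the Laurent polynomials (the group algebra
of `ℤ`) into the group algebra `K⟨K⟩ = K[t^K]` of the additive group `(K,+)`. -/
instance instLaurentToGrpAlg (K : Type) [Field K] :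
    Algebra (LaurentPolynomial K) (AddMonoidAlgebra K K) :=
  (AddMonoidAlgebra.mapDomainRingHom K (Int.castAddHom K)).toAlgebra

variable (K : Type) [Field K] [IsAlgClosed K] [CharZero K]
variable (A : Type) [CommRing A] [Algebra K A] [Algebra (LaurentPolynomial K) A]
  [IsScalarTower K (LaurentPolynomial K) A]

/-- `A[t^K] := A ⊗_{K[t,t⁻¹]} K[t^K]`. -/
abbrev AtK := A ⊗[LaurentPolynomial K] (AddMonoidAlgebra K K)

/-- The ring of exponents `E_A := A[t^K][ℓ]`. -/
abbrev EA := Polynomial (AtK K A)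

/-- The canonical inclusion `A → E_A`. -/
def iA : A →+* EA K A :=
  (Polynomial.C).comp (Algebra.TensorProduct.includeLeftRingHom)

/-- The element `t^a ∈ A[t^K] ⊆ E_A`, for `a ∈ K`. -/
def tpow (a : K) : EA K A :=
  Polynomial.C ((1:A) ⊗ₜ[LaurentPolynomial K] (AddMonoidAlgebra.single a 1))

/-- `t ∈ A`, the image of the Laurent variable. -/
def tA : A := algebraMap (LaurentPolynomial K) A (LaurentPolynomial.T 1)

variable {K A}

/-- `∂ : A → A` is a derivation extending `t·d/dt` on `K[t,t⁻¹]`: it kills the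
constants `K` and sends `t` to `t`. -/
def ExtendsTddt (dA : Derivation ℤ A A) : Prop :=
  (∀ c : K, dA (algebraMap K A c) = 0) ∧ dA (tA K A) = tA K A

/-- The characterizing properties of the derivation `∂` on `E_A`: it extends the
derivation `∂` of `A`, satisfies `∂(t^a) = a·t^a` for all `a ∈ K`, and `∂(ℓ) = 1`. -/
def DProps (dA : Derivation ℤ A A) (D : Derivation ℤ (EA K A) (EA K A)) : Prop :=
  (∀ x : A, D (iA K A x) = iA K A (dA x)) ∧
  (∀ a : K, D (tpow K A a) = a • tpow K A a) ∧
  D (Polynomial.X : EA K A) = 1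

/-- `γ : K → Kˣ` is a group homomorphism from `(K,+)` to `Kˣ` with kernel exactly
`ℤ` (induced by a choice of isomorphism `K/ℤ ≅ Kˣ`). -/
def GammaProps (γ : K → Kˣ) : Prop :=
  (∀ a b : K, γ (a + b) = γ a * γ b) ∧ (∀ a : K, γ a = 1 ↔ ∃ n : ℤ, (n : K) = a)

/-- The characterizing properties of the monodromy automorphism `σ` of `E_A`:
it fixes `A` pointwise, `σ(t^a) = γ(a)·t^a`, and `σ(ℓ) = ℓ + 1`. -/
def SProps (γ : K → Kˣ) (σ : EA K A ≃+* EA K A) : Prop :=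
  (∀ x : A, σ (iA K A x) = iA K A x) ∧
  (∀ a : K, σ (tpow K A a) = ((γ a : K) • tpow K A a)) ∧
  σ (Polynomial.X : EA K A) = Polynomial.X + 1

/-- `A` is a differential `K`-algebra without exponents nor logarithm:
`A^{∂²=0} = K` and `A^{∂+a=0} = 0` for every `a ∈ K` not in `ℤ`. -/
def NoExpLog (dA : Derivation ℤ A A) : Prop :=
  (∀ x : A, dA (dA x) = 0 ↔ ∃ c : K, x = algebraMap K A c) ∧
  (∀ a : K, (¬ ∃ n : ℤ, (n : K) = a) → ∀ x : A, dA x + a • x = 0 → x = 0)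



theorem isUnit_natCast_of_algebra {K R : Type*} [Field K] [CharZero K] [CommRing R] [Algebra K R]
    {n : ℕ} (hn : n ≠ 0) : IsUnit (n : R) := by
  rw [← map_natCast (algebraMap K R)]
  exact (isUnit_iff_ne_zero.mpr (Nat.cast_ne_zero.mpr hn)).map _

namespace Polynomial

section TwistedDifference

variable {K R : Type*} [Field K] [CommRing R] [Algebra K R]

def twistedDiff (u : K) : R[X] →ₗ[R] R[X] := u • taylor 1 - LinearMap.id

theorem twistedDiff_apply (u : K) (p : R[X]) : twistedDiff u p = u • taylor 1 p - p := rfl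

theorem eq_zero_of_smul_taylor_one_eq_self {u : K} (hu : u ≠ 1) {p : R[X]}
    (h : u • taylor 1 p = p) : p = 0 := by
  have hlead : (u - 1) • p.leadingCoeff = 0 := by
    rw [sub_smul, one_smul, sub_eq_zero]
    simpa only [coeff_smul, coeff_taylor_natDegree, coeff_natDegree] using
      congr_arg (coeff · p.natDegree) h
  rwa [smul_eq_zero_iff_right (sub_ne_zero.mpr hu), leadingCoeff_eq_zero] at hlead

theorem exists_eq_C_of_taylor_one_eq_self [CharZero K] {p : R[X]} (h : taylor 1 p = p) :
    ∃ y : R, p = C y := by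
  refine ⟨p.coeff 0, eq_C_of_natDegree_eq_zero (by_contra fun hd => ?_)⟩
  have hΔ : fwdDiff 1 (eval · p) = fun _ => 0 := by
    funext x
    rw [fwdDiff, ← taylor_eval, h, sub_self]
  have hfact := congr_fun p.fwdDiff_iter_degree_eq_factorial 0
  obtain ⟨m, hm⟩ := Nat.exists_eq_succ_of_ne_zero hd
  rw [hm, Function.iterate_succ_apply, hΔ, Function.iterate_fixed (fwdDiff_const 1 0), ← hm]
    at hfact
  simp only [Pi.smul_apply, Pi.natCast_apply, smul_eq_mul] at hfact
  have hlead : p.leadingCoeff = 0 :=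
    (isUnit_natCast_of_algebra (K := K) p.natDegree.factorial_ne_zero).mul_left_eq_zero.mp
      hfact.symm
  exact hd (by rw [leadingCoeff_eq_zero.mp hlead, natDegree_zero])

theorem mem_of_degree_lt_of_forall_X_pow_mem {N : Submodule R R[X]} {d : ℕ}
    (hX : ∀ n < d, (X ^ n : R[X]) ∈ N) {p : R[X]} (hp : p.degree < d) : p ∈ N := by
  classical
  have hspan := degreeLT_eq_span_X_pow (R := R) (n := d) ▸ mem_degreeLT.mpr hp
  refine Submodule.span_le.mpr ?_ hspan
  simp only [Finset.coe_image, Finset.coe_range, Set.image_subset_iff]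
  exact fun n hn => hX n hn

theorem degree_X_add_one_pow_sub_X_pow_lt (d : ℕ) :
    ((X + 1) ^ d - X ^ d : R[X]).degree < d := by
  rw [degree_lt_iff_coeff_zero]
  intro m hm
  rcases (show d ≤ m by exact_mod_cast hm).eq_or_lt with rfl | hlt
  · simp [coeff_X_add_one_pow]
  · simp [coeff_X_add_one_pow, Nat.choose_eq_zero_of_lt hlt, hlt.ne']

theorem degree_X_add_one_pow_succ_sub_lt (d : ℕ) :
    ((X + 1) ^ (d + 1) - X ^ (d + 1) - (d + 1) • X ^ d : R[X]).degree < d := by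
  rw [degree_lt_iff_coeff_zero]
  intro m hm
  rcases (show d ≤ m by exact_mod_cast hm).eq_or_lt with rfl | hlt
  · simp only [coeff_sub, coeff_smul, coeff_X_add_one_pow, coeff_X_pow, Nat.choose_succ_self_right]
    simp
  · simp only [coeff_sub, coeff_smul, coeff_X_add_one_pow, coeff_X_pow, if_neg hlt.ne']
    rcases (Nat.succ_le_of_lt hlt).eq_or_lt with rfl | hlt'
    · simp
    · simp [Nat.choose_eq_zero_of_lt hlt', hlt'.ne']

theorem exists_degree_twistedDiff_sub_X_pow_lt [CharZero K] (u : K) (d : ℕ) :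
    ∃ p : R[X], (twistedDiff u p - X ^ d).degree < (d : WithBot ℕ) := by
  have htaylor (c : K) (n : ℕ) : taylor 1 (c • X ^ n : R[X]) = c • (X + 1) ^ n := by
    rw [LinearMap.map_smul_of_tower, taylor_X_pow, map_one]
  by_cases hu : u = 1
  · subst hu
    have hd : (d : K) + 1 ≠ 0 := by exact_mod_cast d.succ_ne_zero
    have h : twistedDiff (1 : K) (((d : K) + 1)⁻¹ • X ^ (d + 1) : R[X]) - X ^ d
        = ((d : K) + 1)⁻¹ • ((X + 1) ^ (d + 1) - X ^ (d + 1) - (d + 1) • X ^ d) := by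
      rw [twistedDiff_apply, htaylor]
      match_scalars <;> field_simp
    exact ⟨_, by rw [h]; exact (degree_smul_le _ _).trans_lt (degree_X_add_one_pow_succ_sub_lt d)⟩
  · have hu' : u - 1 ≠ 0 := sub_ne_zero.mpr hu
    have h : twistedDiff u ((u - 1)⁻¹ • X ^ d : R[X]) - X ^ d
        = ((u - 1)⁻¹ * u) • ((X + 1) ^ d - X ^ d) := by
      rw [twistedDiff_apply, htaylor]
      match_scalars <;> field_simp
      ring
    exact ⟨_, by rw [h]; exact (degree_smul_le _ _).trans_lt (degree_X_add_one_pow_sub_X_pow_lt d)⟩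

theorem twistedDiff_surjective [CharZero K] (u : K) :
    Function.Surjective (twistedDiff (R := R) u) := by
  have hX : ∀ d, (X ^ d : R[X]) ∈ LinearMap.range (twistedDiff u) := by
    intro d
    induction d using Nat.strong_induction_on with
    | _ d ih =>
      obtain ⟨p, hp⟩ := exists_degree_twistedDiff_sub_X_pow_lt (R := R) u d
      simpa using
        sub_mem (LinearMap.mem_range_self _ p) (mem_of_degree_lt_of_forall_X_pow_mem ih hp)
  intro q
  exact mem_of_degree_lt_of_forall_X_pow_mem (fun n _ => hX n)
    (degree_le_natDegree.trans_lt (WithBot.coe_lt_coe.mpr q.natDegree.lt_succ_self))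

end TwistedDifference

end Polynomial

abbrev ModZ (K : Type*) [Field K] := K ⧸ AddSubgroup.zmultiples (1 : K)

namespace ModZ

variable {K : Type*} [Field K]

open Classical in
/-- Representatives of `K/ℤ`; `rep 0 = 0` makes the `0`-component of `E_A` exactly `A[ℓ]`. -/
def rep (c : ModZ K) : K := if c = 0 then 0 else c.out

@[simp]
theorem mk_rep (c : ModZ K) : ((rep c : K) : ModZ K) = c := by
  unfold rep
  split_ifs with h
  · rw [h, QuotientAddGroup.mk_zero]
  · exact QuotientAddGroup.out_eq' c

@[simp]
theorem rep_zero : rep (0 : ModZ K) = 0 := if_pos rfl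

theorem mk_intCast_add (n : ℤ) (a : K) : ((n + a : K) : ModZ K) = a := by
  rw [QuotientAddGroup.eq, AddSubgroup.mem_zmultiples_iff]
  exact ⟨-n, by simp⟩

theorem mk_eq_zero_iff {a : K} : (a : ModZ K) = 0 ↔ ∃ n : ℤ, (n : K) = a := by
  simp [QuotientAddGroup.eq_zero_iff, AddSubgroup.mem_zmultiples_iff]

theorem exists_intCast_add_rep (a : K) : ∃ n : ℤ, (n : K) + rep (a : ModZ K) = a := by
  obtain ⟨n, hn⟩ := mk_eq_zero_iff.mp (show ((a - rep (a : ModZ K) : K) : ModZ K) = 0 by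
    rw [QuotientAddGroup.mk_sub, mk_rep, sub_self])
  exact ⟨n, by rw [hn, sub_add_cancel]⟩

def offset (a : K) : ℤ := (exists_intCast_add_rep a).choose

theorem offset_add_rep (a : K) : (offset a : K) + rep (a : ModZ K) = a :=
  (exists_intCast_add_rep a).choose_spec

theorem offset_intCast_add_rep [CharZero K] (n : ℤ) (c : ModZ K) :
    offset ((n : K) + rep c) = n := by
  have h := offset_add_rep ((n : K) + rep c)
  rw [mk_intCast_add, mk_rep, add_left_inj] at h
  exact_mod_cast h

end ModZ

section LaurentBasis

open AddMonoidAlgebra ModZ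

variable {K : Type} [Field K]

theorem laurent_smul_single (m : ℤ) (u a v : K) :
    (single m u : LaurentPolynomial K) • (single a v : AddMonoidAlgebra K K)
      = single ((m : K) + a) (u * v) := by
  rw [Algebra.smul_def, RingHom.algebraMap_toAlgebra, mapDomainRingHom_apply, mapDomain_single,
    single_mul_single]
  rfl

def laurentCoord : AddMonoidAlgebra K K →+ (ModZ K →₀ LaurentPolynomial K) :=
  (Finsupp.liftAddHom fun a : K =>
    (Finsupp.singleAddHom (a : ModZ K)).comp (singleAddHom (offset a))).comp
    coeffAddEquiv.toAddMonoidHom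

theorem laurentCoord_single (a v : K) :
    laurentCoord (single a v) = Finsupp.single (a : ModZ K) (single (offset a) v) := by
  simp [laurentCoord]

variable [CharZero K]

theorem laurentCoord_linearCombination (g : ModZ K →₀ LaurentPolynomial K) :
    laurentCoord (Finsupp.linearCombination _ (fun c => single (rep c) (1 : K)) g) = g := by
  induction g using Finsupp.induction_linear with
  | zero => simp
  | add g₁ g₂ h₁ h₂ => rw [map_add, map_add, h₁, h₂]
  | single c l =>
    rw [Finsupp.linearCombination_single]
    induction l using AddMonoidAlgebra.induction_linear with
    | zero => simp
    | add l₁ l₂ h₁ h₂ => rw [add_smul, map_add, h₁, h₂, Finsupp.single_add]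
    | single m u =>
      rw [laurent_smul_single, mul_one, laurentCoord_single, mk_intCast_add, mk_rep,
        offset_intCast_add_rep]

variable (K) in
def laurentBasis : Module.Basis (ModZ K) (LaurentPolynomial K) (AddMonoidAlgebra K K) :=
  .mk (v := fun c => single (rep c) 1)
    (Function.LeftInverse.injective laurentCoord_linearCombination)
    (by
      rintro f -
      induction f using AddMonoidAlgebra.induction_linear with
      | zero => exact zero_mem _
      | add f₁ f₂ h₁ h₂ => exact add_mem h₁ h₂
      | single a v =>
        have h := laurent_smul_single (offset a) v (rep (a : ModZ K)) 1
        rw [mul_one, offset_add_rep] at h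
        exact h ▸ Submodule.smul_mem _ _ (Submodule.subset_span ⟨_, rfl⟩))

theorem laurentBasis_apply (c : ModZ K) : laurentBasis K c = single (rep c) 1 :=
  Module.Basis.mk_apply ..

end LaurentBasis

section PolynomialBasis

open Polynomial

variable {ι A S : Type*} [CommRing A] [CommRing S] [Algebra A S]

def polynomialEquivOfBasis (e : Module.Basis ι A S) : (ι →₀ A[X]) ≃+ S[X] :=
  (Algebra.TensorProduct.basis A[X] e).repr.symm.toAddEquiv.trans
    ((TensorProduct.comm A A[X] S).toAddEquiv.trans (polyEquivTensor A S).symm.toAddEquiv)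

theorem polynomialEquivOfBasis_single (e : Module.Basis ι A S) (i : ι) (p : A[X]) :
    polynomialEquivOfBasis e (Finsupp.single i p) = C (e i) * p.map (algebraMap A S) := by
  have h : (Algebra.TensorProduct.basis A[X] e).repr.symm (Finsupp.single i p) = p ⊗ₜ e i := by
    rw [Algebra.TensorProduct.basis_repr_symm_apply, e.repr_symm_single_one]
  change (polyEquivTensor A S).symm (TensorProduct.comm A A[X] S
    ((Algebra.TensorProduct.basis A[X] e).repr.symm (Finsupp.single i p))) = _
  rw [h, TensorProduct.comm_tmul, polyEquivTensor_symm_apply_tmul_eq_smul, smul_eq_C_mul]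

end PolynomialBasis

section Monodromy

open Polynomial ModZ

variable {K : Type} [Field K] {A : Type} [CommRing A] [Algebra (LaurentPolynomial K) A]

theorem iA_apply (y : A) : iA K A y = C (algebraMap A (AtK K A) y) := rfl

theorem SProps.apply_map_algebraMap [Algebra K A] [IsScalarTower K (LaurentPolynomial K) A]
    {γ : K → Kˣ} {σ : EA K A ≃+* EA K A} (hσ : SProps γ σ) (p : A[X]) :
    σ (p.map (algebraMap A (AtK K A))) = (taylor 1 p).map (algebraMap A (AtK K A)) := by
  have h : (σ : EA K A →+* EA K A).comp (mapRingHom (algebraMap A (AtK K A)))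
      = (mapRingHom (algebraMap A (AtK K A))).comp (taylorAlgHom (1 : A)).toRingHom := by
    refine ringHom_ext (fun a => ?_) ?_
    · simpa [iA_apply] using hσ.1 a
    · simpa using hσ.2.2
  exact RingHom.congr_fun h p

theorem GammaProps.val_rep_ne_one {γ : K → Kˣ} (hγ : GammaProps γ) {c : ModZ K} (hc : c ≠ 0) :
    (γ (rep c) : K) ≠ 1 := by
  rw [Ne, Units.val_eq_one, hγ.2, ← mk_eq_zero_iff, mk_rep]
  exact hc

variable [CharZero K]

variable (K A) in
def expDecomp : (ModZ K →₀ A[X]) ≃+ EA K A :=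
  polynomialEquivOfBasis (Algebra.TensorProduct.basis A (laurentBasis K))

theorem expDecomp_single (c : ModZ K) (p : A[X]) :
    expDecomp K A (Finsupp.single c p) = tpow K A (rep c) * p.map (algebraMap A (AtK K A)) := by
  rw [expDecomp, polynomialEquivOfBasis_single, Algebra.TensorProduct.basis_apply,
    laurentBasis_apply]
  rfl

theorem expDecomp_single_zero_C (y : A) : expDecomp K A (Finsupp.single 0 (C y)) = iA K A y := by
  rw [expDecomp_single, rep_zero, map_C, iA_apply, tpow, ← AddMonoidAlgebra.one_def,
    ← Algebra.TensorProduct.one_def, map_one, one_mul]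

variable [Algebra K A] [IsScalarTower K (LaurentPolynomial K) A]
  {γ : K → Kˣ} {σ : EA K A ≃+* EA K A}

theorem SProps.apply_expDecomp_single (hσ : SProps γ σ) (c : ModZ K) (p : A[X]) :
    σ (expDecomp K A (Finsupp.single c p))
      = expDecomp K A (Finsupp.single c ((γ (rep c) : K) • taylor 1 p)) := by
  rw [expDecomp_single, map_mul, hσ.2.1, hσ.apply_map_algebraMap, expDecomp_single,
    smul_mul_assoc, ← mul_smul_comm]
  congr 1
  ext n
  simp only [coeff_smul, coeff_map, Algebra.TensorProduct.algebraMap_apply,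
    Algebra.algebraMap_self, RingHom.id_apply, TensorProduct.smul_tmul']

theorem SProps.expDecomp_symm_apply_expDecomp (hσ : SProps γ σ) (f : ModZ K →₀ A[X]) (c : ModZ K) :
    (expDecomp K A).symm (σ (expDecomp K A f)) c = (γ (rep c) : K) • taylor 1 (f c) := by
  induction f using Finsupp.induction_linear with
  | zero =>
    rw [map_zero, map_zero, map_zero, Finsupp.zero_apply, map_zero, smul_zero]
  | add f₁ f₂ h₁ h₂ => simp only [map_add, Finsupp.add_apply, h₁, h₂, smul_add]
  | single c' p =>
    rw [hσ.apply_expDecomp_single, AddEquiv.symm_apply_apply]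
    obtain rfl | hc := eq_or_ne c' c
    · rw [Finsupp.single_eq_same, Finsupp.single_eq_same]
    · rw [Finsupp.single_eq_of_ne hc.symm, Finsupp.single_eq_of_ne hc.symm, map_zero, smul_zero]

theorem SProps.surjective_apply_sub_self (hσ : SProps γ σ) :
    Function.Surjective fun x : EA K A => σ x - x := by
  suffices ∀ f, ∃ x, σ x - x = expDecomp K A f from
    fun z => by simpa using this ((expDecomp K A).symm z)
  intro f
  induction f using Finsupp.induction_linear with
  | zero => exact ⟨0, by rw [map_zero, map_zero]; exact sub_self (0 : EA K A)⟩
  | add f₁ f₂ h₁ h₂ =>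
    obtain ⟨x₁, hx₁⟩ := h₁
    obtain ⟨x₂, hx₂⟩ := h₂
    exact ⟨x₁ + x₂, by rw [map_add, map_add, ← hx₁, ← hx₂]; abel⟩
  | single c p =>
    obtain ⟨q, hq⟩ := twistedDiff_surjective (γ (rep c) : K) p
    refine ⟨expDecomp K A (Finsupp.single c q), ?_⟩
    rw [hσ.apply_expDecomp_single, ← map_sub (expDecomp K A), ← Finsupp.single_sub,
      ← twistedDiff_apply, hq]

theorem SProps.exists_eq_iA_of_apply_eq (hγ : GammaProps γ) (hσ : SProps γ σ) {x : EA K A}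
    (hx : σ x = x) : ∃ y : A, x = iA K A y := by
  set f := (expDecomp K A).symm x
  have hfix (c : ModZ K) : (γ (rep c) : K) • taylor 1 (f c) = f c := by
    rw [← hσ.expDecomp_symm_apply_expDecomp, AddEquiv.apply_symm_apply, hx]
  have hγ0 : γ 0 = 1 := (hγ.2 0).mpr ⟨0, Int.cast_zero⟩
  obtain ⟨y, hy⟩ := exists_eq_C_of_taylor_one_eq_self (K := K) (by simpa [hγ0] using hfix 0)
  have hf : f = Finsupp.single 0 (C y) := by
    refine Finsupp.ext fun c => ?_
    obtain rfl | hc := eq_or_ne c 0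
    · simpa using hy
    · rw [Finsupp.single_eq_of_ne hc,
        eq_zero_of_smul_taylor_one_eq_self (hγ.val_rep_ne_one hc) (hfix c)]
  exact ⟨y, by rw [← expDecomp_single_zero_C, ← hf, AddEquiv.apply_symm_apply]⟩

end Monodromy

theorem stmt_13 (K : Type) [Field K] [CharZero K]
    (A : Type) [CommRing A] [Algebra K A] [Algebra (LaurentPolynomial K) A]
    [IsScalarTower K (LaurentPolynomial K) A]
    (γ : K → Kˣ) (hγ : GammaProps γ)
    (σ : EA K A ≃+* EA K A) (hσ : SProps γ σ) :
    Function.Surjective (fun x : EA K A => σ x - x) ∧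
    (∀ x : EA K A, σ x = x ↔ ∃ y : A, x = iA K A y) := by
  refine ⟨hσ.surjective_apply_sub_self, fun x => ⟨hσ.exists_eq_iA_of_apply_eq hγ, ?_⟩⟩
  rintro ⟨y, rfl⟩
  exact hσ.1 y
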